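/- Let m ≥ 2 and let C be an F₂-linear subspace of (Fin (2^m − 1) → ZMod 2) of dimension m such that every nonzero element of C has Hamming weight at least 2^(m-1). Let D = { x : Fin (2^m − 1) → ZMod 2 | ∀ c ∈ C, ∑ i, x i * c i = 0 } be the dual code of C. Then every nonzero element of D has Hamming weight at least 3; i.e. the dual code of any binary linear [2^m − 1, m, 2^(m-1)] code has minimum distance at least 3 (and is hence a perfect single-error-correcting code). -/

import Mathlib

/-!
Plotkin's averaging argument. In a binary linear code every coordinate is either identically zero
or nonzero on exactly half of the codewords, so a code `K` of length `n` vanishing on `s`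
coordinates has total weight at most `(n - s) |K| / 2`, while minimum weight `w` makes the total
weight at least `(|K| - 1) w`. For `n = 2w - 1` this gives `(s + 1) |K| ≤ 2w`.
A dual word supported on `{i}` makes all of `C` vanish at `i`, giving `2 · 2^m ≤ 2^m`; one
supported on `{i, j}` makes the subcode `{c ∈ C | c i = 0}`, of size at least `2^(m-1)`, vanish at
`i` and `j`, giving `3 · 2^(m-1) ≤ 2^m`.
-/

open Finset

theorem ZMod.eq_one_of_ne_zero {a : ZMod 2} (h : a ≠ 0) : a = 1 :=
  Fin.eq_one_of_ne_zero a h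

section

variable {ι : Type*}

theorem sum_hammingNorm_eq_sum_card_filter [Fintype ι] {α β : Type*} [Zero β] [DecidableEq β]
    (s : Finset α) (v : α → ι → β) :
    ∑ a ∈ s, hammingNorm (v a) = ∑ i, #{a ∈ s | v a i ≠ 0} :=
  sum_card_bipartiteAbove_eq_sum_card_bipartiteBelow (fun a i => v a i ≠ 0)

theorem sum_mul_eq_sum_filter_ne_zero [Fintype ι] (x c : ι → ZMod 2) :
    ∑ i, x i * c i = ∑ i with x i ≠ 0, c i := by
  rw [sum_filter]
  refine sum_congr rfl fun i _ => ?_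
  split_ifs with hx
  · rw [ZMod.eq_one_of_ne_zero hx, one_mul]
  · rw [not_not.mp hx, zero_mul]

namespace Submodule

variable (K : Submodule (ZMod 2) (ι → ZMod 2))

theorem card_filter_apply_ne_zero_le [Fintype K] (i : ι) :
    #{c : K | (c : ι → ZMod 2) i ≠ 0} ≤ #{c : K | (c : ι → ZMod 2) i = 0} := by
  obtain h | ⟨c₀, hc₀⟩ := ({c : K | (c : ι → ZMod 2) i ≠ 0} : Finset K).eq_empty_or_nonempty
  · simp [h]
  · refine card_le_card_of_injOn (· + c₀) (fun c hc => ?_) (add_left_injective c₀).injOn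
    simp only [coe_filter, mem_filter, mem_univ, true_and, Set.mem_ofPred_eq, coe_add,
      Pi.add_apply] at hc hc₀ ⊢
    rw [ZMod.eq_one_of_ne_zero hc, ZMod.eq_one_of_ne_zero hc₀]
    rfl

theorem two_mul_card_filter_apply_ne_zero_le [Fintype K] (i : ι) :
    2 * #{c : K | (c : ι → ZMod 2) i ≠ 0} ≤ Fintype.card K := by
  have hsplit := card_filter_add_card_filter_not (s := univ) fun c : K => (c : ι → ZMod 2) i ≠ 0
  simp only [not_not, card_univ] at hsplit
  have := card_filter_apply_ne_zero_le K i
  omega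

theorem card_le_two_mul_card_inf_ker_proj [Fintype ι] (i : ι) :
    Nat.card K ≤ 2 * Nat.card ↥(K ⊓ LinearMap.ker (LinearMap.proj i)) := by
  classical
  have hker : Nat.card ↥(K ⊓ LinearMap.ker (LinearMap.proj i)) =
      #{c : K | (c : ι → ZMod 2) i = 0} := by
    rw [← Fintype.card_subtype, ← Nat.card_eq_fintype_card]
    exact Nat.card_congr (Equiv.subtypeSubtypeEquivSubtypeInter (· ∈ K) (· i = 0)).symm
  have hsplit := card_filter_add_card_filter_not (s := univ) fun c : K => (c : ι → ZMod 2) i ≠ 0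
  simp only [not_not, card_univ] at hsplit
  have := card_filter_apply_ne_zero_le K i
  rw [hker, Nat.card_eq_fintype_card]
  omega

theorem card_sub_one_mul_le_sum_hammingNorm [Fintype ι] [Fintype K] {w : ℕ}
    (hw : ∀ c ∈ K, c ≠ 0 → w ≤ hammingNorm c) :
    (Fintype.card K - 1) * w ≤ ∑ c : K, hammingNorm (c : ι → ZMod 2) :=
  calc (Fintype.card K - 1) * w = #((univ : Finset K).erase 0) • w := by
        rw [card_erase_of_mem (mem_univ _), card_univ, smul_eq_mul]
    _ ≤ ∑ c ∈ (univ : Finset K).erase 0, hammingNorm (c : ι → ZMod 2) :=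
        card_nsmul_le_sum _ _ _ fun c hc => hw c c.2 (by simpa using ne_of_mem_erase hc)
    _ ≤ ∑ c : K, hammingNorm (c : ι → ZMod 2) := sum_le_sum_of_subset (erase_subset _ _)

theorem two_mul_sum_hammingNorm_le [Fintype ι] [DecidableEq ι] [Fintype K] {S : Finset ι}
    (hS : ∀ c ∈ K, ∀ i ∈ S, c i = 0) :
    2 * ∑ c : K, hammingNorm (c : ι → ZMod 2) ≤ (Fintype.card ι - #S) * Fintype.card K := by
  have hvanish : ∀ i ∈ S, #{c : K | (c : ι → ZMod 2) i ≠ 0} = 0 := fun i hi => by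
    simp [hS _ (coe_mem _) i hi]
  calc 2 * ∑ c : K, hammingNorm (c : ι → ZMod 2)
      = ∑ i ∈ Sᶜ, 2 * #{c : K | (c : ι → ZMod 2) i ≠ 0} := by
        rw [sum_hammingNorm_eq_sum_card_filter, mul_sum, ← sum_compl_add_sum S,
          sum_eq_zero (s := S) fun i hi => by rw [hvanish i hi, mul_zero], add_zero]
    _ ≤ ∑ _i ∈ Sᶜ, Fintype.card K :=
        sum_le_sum fun i _ => two_mul_card_filter_apply_ne_zero_le K i
    _ = (Fintype.card ι - #S) * Fintype.card K := by rw [sum_const, card_compl, smul_eq_mul]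

theorem plotkin_bound [Fintype ι] [DecidableEq ι] {S : Finset ι} {w : ℕ}
    (hS : ∀ c ∈ K, ∀ i ∈ S, c i = 0) (hw : ∀ c ∈ K, c ≠ 0 → w ≤ hammingNorm c) :
    2 * ((Nat.card K - 1) * w) ≤ (Fintype.card ι - #S) * Nat.card K := by
  classical
  rw [Nat.card_eq_fintype_card]
  exact (Nat.mul_le_mul_left 2 (card_sub_one_mul_le_sum_hammingNorm K hw)).trans
    (two_mul_sum_hammingNorm_le K hS)

theorem succ_card_mul_card_le [Fintype ι] [DecidableEq ι] {S : Finset ι} {w : ℕ}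
    (hlen : Fintype.card ι + 1 = 2 * w) (hS : ∀ c ∈ K, ∀ i ∈ S, c i = 0)
    (hw : ∀ c ∈ K, c ≠ 0 → w ≤ hammingNorm c) :
    (#S + 1) * Nat.card K ≤ 2 * w := by
  have hplotkin := plotkin_bound K hS hw
  have hS_le : #S ≤ Fintype.card ι := card_le_univ S
  have hK : 0 < Nat.card K := Nat.card_pos
  zify [hS_le, hK] at hplotkin ⊢
  nlinarith

theorem exists_le_vanishing_card_le [Fintype ι] [DecidableEq ι] {S : Finset ι}
    (hS : S.Nonempty) (hS_card : #S ≤ 2) (hsum : ∀ c ∈ K, ∑ i ∈ S, c i = 0) :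
    ∃ L ≤ K, (∀ c ∈ L, ∀ i ∈ S, c i = 0) ∧ Nat.card K ≤ #S * Nat.card L := by
  obtain hS_one | hS_two : #S = 1 ∨ #S = 2 := by have := hS.card_pos; omega
  · obtain ⟨i, rfl⟩ := card_eq_one.mp hS_one
    refine ⟨K, le_rfl, fun c hc k hk => ?_, by simp⟩
    simpa [mem_singleton.mp hk] using hsum c hc
  · obtain ⟨i, j, hij, rfl⟩ := card_eq_two.mp hS_two
    refine ⟨K ⊓ LinearMap.ker (LinearMap.proj i), inf_le_left, fun c hc k hk => ?_,
      hS_two.symm ▸ card_le_two_mul_card_inf_ker_proj K i⟩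
    have hci : c i = 0 := hc.2
    have hcj := hsum c hc.1
    rw [sum_pair hij, hci, zero_add] at hcj
    rcases mem_insert.mp hk with rfl | hk
    · exact hci
    · rwa [mem_singleton.mp hk]

end Submodule

end

theorem dual_of_simplex_has_min_distance_three
    (m : ℕ) (hm : 2 ≤ m)
    (C : Submodule (ZMod 2) (Fin (2 ^ m - 1) → ZMod 2))
    (hdim : Module.finrank (ZMod 2) C = m)
    (hmin : ∀ x ∈ C, x ≠ 0 → 2 ^ (m - 1) ≤ hammingNorm x) :
    ∀ x : Fin (2 ^ m - 1) → ZMod 2,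
      (∀ c ∈ C, ∑ i, x i * c i = 0) → x ≠ 0 → 3 ≤ hammingNorm x := by
  intro x hdual hx
  have hpow : 2 * 2 ^ (m - 1) = 2 ^ m := by rw [← pow_succ', Nat.sub_add_cancel (by omega)]
  have hlen : Fintype.card (Fin (2 ^ m - 1)) + 1 = 2 * 2 ^ (m - 1) := by
    rw [Fintype.card_fin, hpow, Nat.sub_add_cancel Nat.one_le_two_pow]
  have hcard : Nat.card C = 2 ^ m := by
    rw [Module.natCard_eq_pow_finrank (K := ZMod 2), hdim, Nat.card_zmod]
  by_contra! hlt
  obtain ⟨K, hKC, hK, hCK⟩ := C.exists_le_vanishing_card_le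
    (card_pos.mp (hammingNorm_pos_iff.mpr hx)) (Nat.le_of_lt_succ hlt)
    fun c hc => (sum_mul_eq_sum_filter_ne_zero x c).symm.trans (hdual c hc)
  have hK_card := K.succ_card_mul_card_le hlen hK fun c hc => hmin c (hKC hc)
  have hK_pos : 0 < Nat.card K := Nat.card_pos
  rw [add_one_mul] at hK_card
  linarith
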